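/- arXiv:2603.19800 — 2 statements merged into one kernel-verified Lean document; each statement's English description precedes it below -/
import Mathlib

section
/- Let n ≥ 1 and 0 ≤ i ≤ n−1, let P be a real symmetric idempotent n×n matrix (an orthogonal projection) of rank n−i, and set Q = P/(n−i) with entries q_{kℓ}. Then: (1) Σ over all pairwise distinct triples (k,ℓ,s) of |q_{kℓ}·q_{ks}| ≤ n/(n−i); (2) Σ over all pairwise distinct triples (k,ℓ,s) of |q_{kℓ}·q_{ks}·q_{ℓs}| ≤ n/(n−i)²; (3) Σ over all pairwise distinct quadruples (k,ℓ,s,m) of |q_{kℓ}·q_{ks}·q_{ℓm}| ≤ n/(n−i)^{3/2}; (4) Σ over all pairwise distinct quadruples (k,ℓ,s,m) of |q_{kℓ}·q_{ks}·q_{km}| ≤ n^{3/2}/(n−i)². -/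
open Matrix

/-- The trace-normalized projection `Q = P / (n − i)`. -/
noncomputable def qOf (n i : ℕ) (P : Matrix (Fin n) (Fin n) ℝ) :
    Matrix (Fin n) (Fin n) ℝ :=
  (((n - i : ℕ) : ℝ))⁻¹ • P

/-!
For a symmetric idempotent `P` the `k`-th row has squared length `P k k`, so `P k k ≤ 1` and the
squared entries of `P` add up to `tr P = rank P`. Hence the squared entries of `Q = P / r` add up
to `1 / r`, and each row of `Q` has squared length at most `1 / r ^ 2`. Only these two facts are
used afterwards, through the absolute row sums `a k = ∑ l |Q k l|`, for which Cauchy–Schwarz gives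
`a k ^ 2 ≤ n ∑ l Q k l ^ 2`. Dropping the distinctness of the indices only enlarges the sums, and
then the first sum is `∑ a k ^ 2 ≤ n / r`; the second gains a factor `|Q l s| ≤ 1 / r`; the third
is `∑ |Q k l| a k a l ≤ √(∑ Q k l ^ 2) ∑ a k ^ 2` by Cauchy–Schwarz over pairs `(k, l)`; the fourth
is `∑ a k ^ 3 ≤ (max a k) ∑ a k ^ 2` with `a k ≤ √n / r`.
-/

open Finset

namespace Matrix

section EntrySums

variable {ι : Type*} (A : Matrix ι ι ℝ)

theorem sum_abs_triangle_le {ρ : ℝ} (hA : ∀ k l, |A k l| ≤ ρ) (s : Finset (ι × ι × ι)) :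
    ∑ t ∈ s, |A t.1 t.2.1 * A t.1 t.2.2 * A t.2.1 t.2.2|
      ≤ ρ * ∑ t ∈ s, |A t.1 t.2.1 * A t.1 t.2.2| := by
  rw [mul_sum]
  refine sum_le_sum fun t _ => ?_
  rw [abs_mul, mul_comm ρ]
  exact mul_le_mul_of_nonneg_left (hA _ _) (abs_nonneg _)

variable [Fintype ι]

def absRowSum (k : ι) : ℝ := ∑ l, |A k l|

theorem absRowSum_nonneg (k : ι) : 0 ≤ A.absRowSum k :=
  sum_nonneg fun _ _ => abs_nonneg _

theorem absRowSum_sq_le (k : ι) : A.absRowSum k ^ 2 ≤ Fintype.card ι * ∑ l, A k l ^ 2 := by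
  simpa only [absRowSum, sq_abs, card_univ] using
    sq_sum_le_card_mul_sum_sq (s := univ) (f := fun l => |A k l|)

theorem sum_absRowSum_sq_le :
    ∑ k, A.absRowSum k ^ 2 ≤ Fintype.card ι * ∑ k, ∑ l, A k l ^ 2 := by
  rw [mul_sum]
  exact sum_le_sum fun k _ => A.absRowSum_sq_le k

theorem absRowSum_le {ρ : ℝ} (hρ : 0 ≤ ρ) {k : ι} (hrow : ∑ l, A k l ^ 2 ≤ ρ ^ 2) :
    A.absRowSum k ≤ √(Fintype.card ι) * ρ := by
  refine abs_le_of_sq_le_sq' ?_ (by positivity) |>.2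
  rw [mul_pow, Real.sq_sqrt (Nat.cast_nonneg _)]
  exact (A.absRowSum_sq_le k).trans (by gcongr)

theorem abs_le_of_sum_sq_row_le {ρ : ℝ} (hρ : 0 ≤ ρ) {k : ι} (hrow : ∑ l, A k l ^ 2 ≤ ρ ^ 2)
    (l : ι) : |A k l| ≤ ρ :=
  abs_le_of_sq_le_sq ((single_le_sum (fun l _ => sq_nonneg (A k l)) (mem_univ l)).trans hrow) hρ

theorem sum_abs_cherry_eq :
    ∑ t : ι × ι × ι, |A t.1 t.2.1 * A t.1 t.2.2| = ∑ k, A.absRowSum k ^ 2 := by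
  simp only [abs_mul, Fintype.sum_prod_type, ← mul_sum, ← sum_mul, absRowSum, sq]

theorem sum_abs_star_eq :
    ∑ t : ι × ι × ι × ι, |A t.1 t.2.1 * A t.1 t.2.2.1 * A t.1 t.2.2.2|
      = ∑ k, A.absRowSum k ^ 3 := by
  simp only [abs_mul, Fintype.sum_prod_type, ← mul_sum, ← sum_mul, absRowSum, pow_succ, pow_zero,
    one_mul]

theorem sum_abs_path_eq :
    ∑ t : ι × ι × ι × ι, |A t.1 t.2.1 * A t.1 t.2.2.1 * A t.2.1 t.2.2.2|
      = ∑ p : ι × ι, |A p.1 p.2| * (A.absRowSum p.1 * A.absRowSum p.2) := by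
  simp only [abs_mul, Fintype.sum_prod_type, ← mul_sum, ← sum_mul, absRowSum]
  exact sum_congr rfl fun k _ => sum_congr rfl fun l _ => by ring

theorem sum_abs_cherry_le (s : Finset (ι × ι × ι)) :
    ∑ t ∈ s, |A t.1 t.2.1 * A t.1 t.2.2| ≤ Fintype.card ι * ∑ k, ∑ l, A k l ^ 2 :=
  (sum_le_univ_sum_of_nonneg fun _ => abs_nonneg _).trans
    (A.sum_abs_cherry_eq.trans_le A.sum_absRowSum_sq_le)

theorem sum_abs_path_le (s : Finset (ι × ι × ι × ι)) :
    ∑ t ∈ s, |A t.1 t.2.1 * A t.1 t.2.2.1 * A t.2.1 t.2.2.2|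
      ≤ Fintype.card ι * (∑ k, ∑ l, A k l ^ 2) * √(∑ k, ∑ l, A k l ^ 2) := by
  have hprod : ∑ p : ι × ι, (A.absRowSum p.1 * A.absRowSum p.2) ^ 2
      = (∑ k, A.absRowSum k ^ 2) ^ 2 := by
    simp only [Fintype.sum_prod_type, mul_pow, ← mul_sum, ← sum_mul]
    ring
  calc _ ≤ _ := sum_le_univ_sum_of_nonneg fun _ => abs_nonneg _
    _ = ∑ p : ι × ι, |A p.1 p.2| * (A.absRowSum p.1 * A.absRowSum p.2) := A.sum_abs_path_eq
    _ ≤ √(∑ p : ι × ι, |A p.1 p.2| ^ 2) *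
          √(∑ p : ι × ι, (A.absRowSum p.1 * A.absRowSum p.2) ^ 2) :=
        Real.sum_mul_le_sqrt_mul_sqrt _ _ _
    _ = √(∑ k, ∑ l, A k l ^ 2) * ∑ k, A.absRowSum k ^ 2 := by
        rw [hprod, Real.sqrt_sq (sum_nonneg fun _ _ => sq_nonneg _)]
        simp only [sq_abs, Fintype.sum_prod_type]
    _ ≤ √(∑ k, ∑ l, A k l ^ 2) * (Fintype.card ι * ∑ k, ∑ l, A k l ^ 2) := by
        gcongr; exact A.sum_absRowSum_sq_le
    _ = _ := by ring

theorem sum_abs_star_le {ρ : ℝ} (hρ : 0 ≤ ρ) (hrow : ∀ k, ∑ l, A k l ^ 2 ≤ ρ ^ 2)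
    (s : Finset (ι × ι × ι × ι)) :
    ∑ t ∈ s, |A t.1 t.2.1 * A t.1 t.2.2.1 * A t.1 t.2.2.2|
      ≤ √(Fintype.card ι) * ρ * (Fintype.card ι * ∑ k, ∑ l, A k l ^ 2) := by
  calc _ ≤ _ := sum_le_univ_sum_of_nonneg fun _ => abs_nonneg _
    _ = ∑ k, A.absRowSum k ^ 3 := A.sum_abs_star_eq
    _ = ∑ k, A.absRowSum k * A.absRowSum k ^ 2 :=
        sum_congr rfl fun k _ => pow_succ' _ 2
    _ ≤ ∑ k, √(Fintype.card ι) * ρ * A.absRowSum k ^ 2 := by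
        gcongr with k
        exact A.absRowSum_le hρ (hrow k)
    _ ≤ _ := by
        rw [← mul_sum]; gcongr; exact A.sum_absRowSum_sq_le

end EntrySums

section Projection

variable {ι : Type*} [Fintype ι]

theorem trace_eq_rank_of_mul_self {K : Type*} [Field K] [DecidableEq ι] {P : Matrix ι ι K}
    (h : P * P = P) : P.trace = P.rank := by
  have he : IsIdempotentElem (toLin' P) := by
    rw [IsIdempotentElem, Module.End.mul_eq_comp, ← toLin'_mul, h]
  rw [← trace_toLin'_eq, ((LinearMap.isProj_range_iff_isIdempotentElem _).2 he).trace]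
  rfl

theorem IsSymm.sum_sq_row_eq_diag_of_mul_self {R : Type*} [CommSemiring R] {P : Matrix ι ι R}
    (hs : P.IsSymm) (h : P * P = P) (k : ι) : ∑ l, P k l ^ 2 = P k k := by
  conv_rhs => rw [← h, mul_apply]
  refine sum_congr rfl fun l _ => ?_
  rw [sq, hs.apply l k]

theorem IsSymm.diag_le_one_of_mul_self {P : Matrix ι ι ℝ} (hs : P.IsSymm) (h : P * P = P)
    (k : ι) : P k k ≤ 1 := by
  have hk := single_le_sum (fun l _ => sq_nonneg (P k l)) (mem_univ k)
  rw [hs.sum_sq_row_eq_diag_of_mul_self h k] at hk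
  nlinarith

theorem IsSymm.sum_sq_eq_rank_of_mul_self {P : Matrix ι ι ℝ} (hs : P.IsSymm) (h : P * P = P) :
    ∑ k, ∑ l, P k l ^ 2 = P.rank := by
  classical
  simp only [hs.sum_sq_row_eq_diag_of_mul_self h, ← trace_eq_rank_of_mul_self h, trace, diag]

theorem IsSymm.sum_sq_smul_eq_of_mul_self {P : Matrix ι ι ℝ} (hs : P.IsSymm) (h : P * P = P)
    (c : ℝ) : ∑ k, ∑ l, (c • P) k l ^ 2 = c ^ 2 * P.rank := by
  simp only [smul_apply, smul_eq_mul, mul_pow, ← mul_sum, hs.sum_sq_eq_rank_of_mul_self h]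

theorem IsSymm.sum_sq_row_smul_le_of_mul_self {P : Matrix ι ι ℝ} (hs : P.IsSymm)
    (h : P * P = P) (c : ℝ) (k : ι) : ∑ l, (c • P) k l ^ 2 ≤ c ^ 2 := by
  simp only [smul_apply, smul_eq_mul, mul_pow, ← mul_sum, hs.sum_sq_row_eq_diag_of_mul_self h]
  exact mul_le_of_le_one_right (sq_nonneg c) (hs.diag_le_one_of_mul_self h k)

end Projection

end Matrix

theorem Real.rpow_three_halves {x : ℝ} (hx : 0 ≤ x) : x ^ ((3 : ℝ) / 2) = x * √x := by
  rw [show (3 : ℝ) / 2 = 1 + 1 / 2 by norm_num, Real.rpow_add' hx (by norm_num), Real.rpow_one,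
    Real.sqrt_eq_rpow]

theorem q_matrix_bounds_two_general
    (n i : ℕ)
    (P : Matrix (Fin n) (Fin n) ℝ) (hsymm : P.IsSymm) (hidem : P * P = P)
    (hrank : P.rank = n - i) :
    (∑ t ∈ (Finset.univ : Finset (Fin n × Fin n × Fin n)).filter
        (fun t => t.1 ≠ t.2.1 ∧ t.1 ≠ t.2.2 ∧ t.2.1 ≠ t.2.2),
        |qOf n i P t.1 t.2.1 * qOf n i P t.1 t.2.2|
      ≤ (n : ℝ) / ((n - i : ℕ) : ℝ)) ∧
    (∑ t ∈ (Finset.univ : Finset (Fin n × Fin n × Fin n)).filter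
        (fun t => t.1 ≠ t.2.1 ∧ t.1 ≠ t.2.2 ∧ t.2.1 ≠ t.2.2),
        |qOf n i P t.1 t.2.1 * qOf n i P t.1 t.2.2 * qOf n i P t.2.1 t.2.2|
      ≤ (n : ℝ) / ((n - i : ℕ) : ℝ) ^ 2) ∧
    (∑ t ∈ (Finset.univ : Finset (Fin n × Fin n × Fin n × Fin n)).filter
        (fun t => t.1 ≠ t.2.1 ∧ t.1 ≠ t.2.2.1 ∧ t.1 ≠ t.2.2.2 ∧
          t.2.1 ≠ t.2.2.1 ∧ t.2.1 ≠ t.2.2.2 ∧ t.2.2.1 ≠ t.2.2.2),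
        |qOf n i P t.1 t.2.1 * qOf n i P t.1 t.2.2.1 * qOf n i P t.2.1 t.2.2.2|
      ≤ (n : ℝ) / ((n - i : ℕ) : ℝ) ^ ((3 : ℝ) / 2)) ∧
    (∑ t ∈ (Finset.univ : Finset (Fin n × Fin n × Fin n × Fin n)).filter
        (fun t => t.1 ≠ t.2.1 ∧ t.1 ≠ t.2.2.1 ∧ t.1 ≠ t.2.2.2 ∧
          t.2.1 ≠ t.2.2.1 ∧ t.2.1 ≠ t.2.2.2 ∧ t.2.2.1 ≠ t.2.2.2),
        |qOf n i P t.1 t.2.1 * qOf n i P t.1 t.2.2.1 * qOf n i P t.1 t.2.2.2|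
      ≤ (n : ℝ) ^ ((3 : ℝ) / 2) / ((n - i : ℕ) : ℝ) ^ 2) := by
  set Q := qOf n i P
  set r : ℝ := ((n - i : ℕ) : ℝ)
  have hr : 0 ≤ r⁻¹ := inv_nonneg.2 (Nat.cast_nonneg _)
  -- `0⁻¹ = 0` keeps this true when `r = 0`, i.e. when `P = 0`.
  have hfrob : ∑ k, ∑ l, Q k l ^ 2 = r⁻¹ :=
    calc _ = r⁻¹ ^ 2 * P.rank := hsymm.sum_sq_smul_eq_of_mul_self hidem r⁻¹
      _ = r⁻¹ := by rw [hrank, sq]; simpa using mul_self_mul_inv r⁻¹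
  have hrow : ∀ k, ∑ l, Q k l ^ 2 ≤ r⁻¹ ^ 2 := hsymm.sum_sq_row_smul_le_of_mul_self hidem r⁻¹
  have hscale : (Fintype.card (Fin n) : ℝ) * ∑ k, ∑ l, Q k l ^ 2 = n / r := by
    rw [hfrob, Fintype.card_fin, div_eq_mul_inv]
  refine ⟨(Q.sum_abs_cherry_le _).trans_eq hscale, ?_, ?_, ?_⟩
  · have hentry k l : |Q k l| ≤ r⁻¹ := Q.abs_le_of_sum_sq_row_le hr (hrow k) l
    calc _ ≤ r⁻¹ * _ := Q.sum_abs_triangle_le hentry _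
      _ ≤ r⁻¹ * (n / r) := by gcongr; exact (Q.sum_abs_cherry_le _).trans_eq hscale
      _ = _ := by ring
  · calc _ ≤ _ := Q.sum_abs_path_le _
      _ = _ := by
        rw [hfrob, Fintype.card_fin, Real.rpow_three_halves (Nat.cast_nonneg _), Real.sqrt_inv]
        ring
  · calc _ ≤ _ := Q.sum_abs_star_le hr hrow _
      _ = _ := by
        rw [hfrob, Fintype.card_fin, Real.rpow_three_halves (Nat.cast_nonneg _)]
        ring

/-- **Deterministic bounds for the normalized projection matrix** (Lemma 3.4, remaining
bounds): if `P` is an `n × n` orthogonal projection of rank `n − i` and `Q = P/(n−i)`, then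
`∑_{k≠ℓ≠s} |q_{kℓ} q_{ks}| ≤ n/(n−i)`, `∑_{k≠ℓ≠s} |q_{kℓ} q_{ks} q_{ℓs}| ≤ n/(n−i)²`,
`∑_{k≠ℓ≠s≠m} |q_{kℓ} q_{ks} q_{ℓm}| ≤ n/(n−i)^{3/2}` and
`∑_{k≠ℓ≠s≠m} |q_{kℓ} q_{ks} q_{km}| ≤ n^{3/2}/(n−i)²`. -/
theorem q_matrix_bounds_two
    (n i : ℕ) (hn : 1 ≤ n) (hi : i ≤ n - 1)
    (P : Matrix (Fin n) (Fin n) ℝ) (hsymm : P.IsSymm) (hidem : P * P = P)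
    (hrank : P.rank = n - i) :
    (∑ t ∈ (Finset.univ : Finset (Fin n × Fin n × Fin n)).filter
        (fun t => t.1 ≠ t.2.1 ∧ t.1 ≠ t.2.2 ∧ t.2.1 ≠ t.2.2),
        |qOf n i P t.1 t.2.1 * qOf n i P t.1 t.2.2|
      ≤ (n : ℝ) / ((n - i : ℕ) : ℝ)) ∧
    (∑ t ∈ (Finset.univ : Finset (Fin n × Fin n × Fin n)).filter
        (fun t => t.1 ≠ t.2.1 ∧ t.1 ≠ t.2.2 ∧ t.2.1 ≠ t.2.2),
        |qOf n i P t.1 t.2.1 * qOf n i P t.1 t.2.2 * qOf n i P t.2.1 t.2.2|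
      ≤ (n : ℝ) / ((n - i : ℕ) : ℝ) ^ 2) ∧
    (∑ t ∈ (Finset.univ : Finset (Fin n × Fin n × Fin n × Fin n)).filter
        (fun t => t.1 ≠ t.2.1 ∧ t.1 ≠ t.2.2.1 ∧ t.1 ≠ t.2.2.2 ∧
          t.2.1 ≠ t.2.2.1 ∧ t.2.1 ≠ t.2.2.2 ∧ t.2.2.1 ≠ t.2.2.2),
        |qOf n i P t.1 t.2.1 * qOf n i P t.1 t.2.2.1 * qOf n i P t.2.1 t.2.2.2|
      ≤ (n : ℝ) / ((n - i : ℕ) : ℝ) ^ ((3 : ℝ) / 2)) ∧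
    (∑ t ∈ (Finset.univ : Finset (Fin n × Fin n × Fin n × Fin n)).filter
        (fun t => t.1 ≠ t.2.1 ∧ t.1 ≠ t.2.2.1 ∧ t.1 ≠ t.2.2.2 ∧
          t.2.1 ≠ t.2.2.1 ∧ t.2.1 ≠ t.2.2.2 ∧ t.2.2.1 ≠ t.2.2.2),
        |qOf n i P t.1 t.2.1 * qOf n i P t.1 t.2.2.1 * qOf n i P t.1 t.2.2.2|
      ≤ (n : ℝ) ^ ((3 : ℝ) / 2) / ((n - i : ℕ) : ℝ) ^ 2) :=
  q_matrix_bounds_two_general n i P hsymm hidem hrank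
end

section
/- Let n ≥ 2. Let Y = (Y₁,…,Y_n) be an exchangeable random vector of real random variables with Y₁² + Y₂² + ⋯ + Y_n² = 1 almost surely, and set β₄ = E[Y₁⁴]. Let q = (q₁,…,q_n) be a random vector, independent of Y, with 0 ≤ q_j ≤ 1 almost surely for each j and q₁ + ⋯ + q_n = 1 almost surely, and set S₂ = q₁² + ⋯ + q_n². Then E[ ( Σ_{j=1}^{n} q_j·( n·Y_j² − 1 ) )² ] = n·(n²·β₄ − 1)/(n−1) · E[ S₂ − 1/n ]. -/
open MeasureTheory ProbabilityTheory

/-!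
Put `Z_j = n Y_j² - 1`, so that `∑ Z_j = 0`. By exchangeability the covariance matrix of `Z` has
a constant diagonal `c` and a constant off-diagonal `m`, and `∑_k Z_k = 0` forces
`c + (n - 1) m = 0`. Independence factors `E[(∑ q_j Z_j)²]` as `∑_{j,k} E[Z_j Z_k] E[q_j q_k]`,
which `∑ q_j = 1` reduces to `m + (c - m) E[S₂] = (c - m) E[S₂ - 1/n]`. Finally `E[Y_j²] = 1/n`
gives `c = n² β₄ - 1`.
-/

namespace ProbabilityTheory

variable {Ω ι : Type*} [MeasurableSpace Ω] {P : Measure Ω}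

lemma sq_le_one_of_sum_sq_eq_one [Fintype ι] {x : ι → ℝ} (h : ∑ j, x j ^ 2 = 1) (i : ι) :
    x i ^ 2 ≤ 1 :=
  h ▸ Finset.single_le_sum (fun j _ => sq_nonneg (x j)) (Finset.mem_univ i)

lemma integrable_mul_of_ae_abs_le [IsFiniteMeasure P] {X : Ω → ι → ℝ} (hXm : Measurable X)
    {C : ℝ} (hC : ∀ᵐ ω ∂P, ∀ j, |X ω j| ≤ C) (j k : ι) :
    Integrable (fun ω => X ω j * X ω k) P :=
  Integrable.of_bound (by fun_prop) (C * C) <| by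
    filter_upwards [hC] with ω h
    rw [Real.norm_eq_abs, abs_mul]
    exact mul_le_mul (h j) (h k) (abs_nonneg _) ((abs_nonneg _).trans (h j))

def Exchangeable {E : Type*} [MeasurableSpace E] (P : Measure Ω) (X : Ω → ι → E) : Prop :=
  ∀ σ : Equiv.Perm ι, P.map (fun ω i => X ω (σ i)) = P.map X

namespace Exchangeable

section General

variable {E : Type*} [MeasurableSpace E] {X : Ω → ι → E}

lemma comp_apply (hX : Exchangeable P X) (hXm : Measurable X) {F : Type*} [MeasurableSpace F]
    {f : E → F} (hf : Measurable f) : Exchangeable P (fun ω i => f (X ω i)) := by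
  intro σ
  have hF : Measurable fun (v : ι → E) i => f (v i) := by fun_prop
  have hXσ : Measurable fun ω i => X ω (σ i) := by fun_prop
  calc P.map (fun ω i => f (X ω (σ i)))
      = (P.map fun ω i => X ω (σ i)).map fun v i => f (v i) := (Measure.map_map hF hXσ).symm
    _ = (P.map X).map fun v i => f (v i) := by rw [hX σ]
    _ = P.map fun ω i => f (X ω i) := Measure.map_map hF hXm

lemma integral_comp_perm (hX : Exchangeable P X) (hXm : Measurable X) (σ : Equiv.Perm ι)
    {g : (ι → E) → ℝ} (hg : Measurable g) :
    ∫ ω, g (fun i => X ω (σ i)) ∂P = ∫ ω, g (X ω) ∂P := by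
  have hXσ : Measurable fun ω i => X ω (σ i) := by fun_prop
  rw [← integral_map hXσ.aemeasurable hg.aestronglyMeasurable, hX σ,
    integral_map hXm.aemeasurable hg.aestronglyMeasurable]

lemma integral_comp_apply_eq (hX : Exchangeable P X) (hXm : Measurable X) {f : E → ℝ}
    (hf : Measurable f) (i j : ι) : ∫ ω, f (X ω i) ∂P = ∫ ω, f (X ω j) ∂P := by
  classical
  simpa using hX.integral_comp_perm hXm (Equiv.swap j i) (g := fun v => f (v j)) (by fun_prop)

end General

variable {X : Ω → ι → ℝ}

lemma integral_mul_eq_of_ne (hX : Exchangeable P X) (hXm : Measurable X) {i j k l : ι}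
    (hij : i ≠ j) (hkl : k ≠ l) : ∫ ω, X ω i * X ω j ∂P = ∫ ω, X ω k * X ω l ∂P := by
  obtain ⟨σ, hσk, hσl⟩ :=
    MulAction.is_two_pretransitive_iff.mp (Equiv.Perm.isMultiplyPretransitive ι 2) hkl hij
  rw [← hσk, ← hσl]
  exact hX.integral_comp_perm hXm σ (g := fun v => v k * v l) (by fun_prop)

lemma integral_mul_of_sum_eq_zero [Fintype ι] (hX : Exchangeable P X)
    (hXm : Measurable X) (hint : ∀ j k, Integrable (fun ω => X ω j * X ω k) P)
    (hsum : ∀ᵐ ω ∂P, ∑ j, X ω j = 0) {i j : ι} (hij : i ≠ j) :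
    ∫ ω, X ω i * X ω j ∂P = -(∫ ω, X ω i * X ω i ∂P) / (Fintype.card ι - 1) := by
  classical
  have : Nonempty ι := ⟨i⟩
  have hcard : (1 : ℝ) < Fintype.card ι := by
    exact_mod_cast Fintype.one_lt_card_iff_nontrivial.mpr ⟨i, j, hij⟩
  have hrow : ∑ k, ∫ ω, X ω i * X ω k ∂P = 0 := by
    rw [← integral_finsetSum _ fun k _ => hint i k]
    refine integral_eq_zero_of_ae ?_
    filter_upwards [hsum] with ω h
    simp [← Finset.mul_sum, h]
  have hsplit : ∑ k, ∫ ω, X ω i * X ω k ∂P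
      = ∫ ω, X ω i * X ω i ∂P + (Fintype.card ι - 1) * ∫ ω, X ω i * X ω j ∂P := by
    rw [← Finset.add_sum_erase _ _ (Finset.mem_univ i), Finset.sum_congr rfl fun k hk =>
      hX.integral_mul_eq_of_ne hXm (Finset.ne_of_mem_erase hk).symm hij, Finset.sum_const,
      Finset.card_erase_of_mem (Finset.mem_univ i), Finset.card_univ, nsmul_eq_mul,
      Nat.cast_sub Fintype.card_pos]
    simp
  rw [eq_div_iff (by linarith)]
  linarith

lemma integral_sq_eq_of_sum_sq_eq_one [Fintype ι] [IsProbabilityMeasure P]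
    (hX : Exchangeable P X) (hXm : Measurable X) (hnorm : ∀ᵐ ω ∂P, ∑ j, X ω j ^ 2 = 1) (i : ι) :
    ∫ ω, X ω i ^ 2 ∂P = 1 / Fintype.card ι := by
  have hint : ∀ j, Integrable (fun ω => X ω j ^ 2) P := fun j =>
    Integrable.of_bound (by fun_prop) 1 <| by
      filter_upwards [hnorm] with ω h
      rw [Real.norm_of_nonneg (sq_nonneg _)]
      exact sq_le_one_of_sum_sq_eq_one h j
  have htotal : ∑ j, ∫ ω, X ω j ^ 2 ∂P = 1 := by
    rw [← integral_finsetSum _ fun j _ => hint j, integral_congr_ae hnorm]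
    simp
  have : Nonempty ι := ⟨i⟩
  have hcard : (Fintype.card ι : ℝ) ≠ 0 := by exact_mod_cast Fintype.card_ne_zero
  simp only [fun j => hX.integral_comp_apply_eq hXm (f := fun x => x ^ 2) (by fun_prop) j i,
    Finset.sum_const, Finset.card_univ, nsmul_eq_mul] at htotal
  field_simp
  linarith

lemma integral_card_mul_sq_sub_one_sq [Fintype ι] [IsProbabilityMeasure P]
    (hX : Exchangeable P X) (hXm : Measurable X) (hnorm : ∀ᵐ ω ∂P, ∑ j, X ω j ^ 2 = 1) (i : ι) :
    ∫ ω, ((Fintype.card ι : ℝ) * X ω i ^ 2 - 1) ^ 2 ∂P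
      = (Fintype.card ι : ℝ) ^ 2 * (∫ ω, X ω i ^ 4 ∂P) - 1 := by
  set N : ℝ := (Fintype.card ι : ℝ)
  have : Nonempty ι := ⟨i⟩
  have hN : N ≠ 0 := by simp only [N]; exact_mod_cast Fintype.card_ne_zero
  have hpow : ∀ k : ℕ, Integrable (fun ω => X ω i ^ k) P := fun k =>
    Integrable.of_bound (by fun_prop) 1 <| hnorm.mono fun ω h => by
      rw [norm_pow, Real.norm_eq_abs]
      exact pow_le_one₀ (abs_nonneg _)
        ((sq_le_one_iff_abs_le_one _).mp (sq_le_one_of_sum_sq_eq_one h i))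
  have h₄ := (hpow 4).const_mul (N ^ 2)
  have h₂ := (hpow 2).const_mul (2 * N)
  calc ∫ ω, (N * X ω i ^ 2 - 1) ^ 2 ∂P
      = ∫ ω, (N ^ 2 * X ω i ^ 4 - 2 * N * X ω i ^ 2 + 1) ∂P := by
        congr 1; funext ω; ring
    _ = N ^ 2 * (∫ ω, X ω i ^ 4 ∂P) - 2 * N * ∫ ω, X ω i ^ 2 ∂P + 1 := by
        rw [integral_add (by exact h₄.sub h₂) (integrable_const _), integral_sub h₄ h₂,
          integral_const_mul, integral_const_mul]
        simp
    _ = N ^ 2 * (∫ ω, X ω i ^ 4 ∂P) - 1 := by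
        rw [hX.integral_sq_eq_of_sum_sq_eq_one hXm hnorm i]
        field_simp
        ring

end Exchangeable

lemma integral_sq_sum_eq_sum_sum [Fintype ι] {V : Ω → ι → ℝ}
    (hV : ∀ j k, Integrable (fun ω => V ω j * V ω k) P) :
    ∫ ω, (∑ j, V ω j) ^ 2 ∂P = ∑ j, ∑ k, ∫ ω, V ω j * V ω k ∂P := by
  simp_rw [sq, Finset.sum_mul_sum]
  rw [integral_finsetSum _ fun j _ => integrable_finsetSum _ fun k _ => hV j k]
  exact Finset.sum_congr rfl fun j _ => integral_finsetSum _ fun k _ => hV j k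

lemma IndepFun.integral_sq_sum_mul [Fintype ι] {X W : Ω → ι → ℝ} (hXW : IndepFun X W P)
    (hX : ∀ j k, Integrable (fun ω => X ω j * X ω k) P)
    (hW : ∀ j k, Integrable (fun ω => W ω j * W ω k) P) :
    ∫ ω, (∑ j, W ω j * X ω j) ^ 2 ∂P
      = ∑ j, ∑ k, (∫ ω, X ω j * X ω k ∂P) * ∫ ω, W ω j * W ω k ∂P := by
  have hindep : ∀ j k, IndepFun (fun ω => X ω j * X ω k) (fun ω => W ω j * W ω k) P :=
    fun j k => hXW.comp (φ := fun v : ι → ℝ => v j * v k) (ψ := fun v : ι → ℝ => v j * v k)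
      (by fun_prop) (by fun_prop)
  have hrearrange : ∀ j k, (fun ω => W ω j * X ω j * (W ω k * X ω k))
      = fun ω => X ω j * X ω k * (W ω j * W ω k) := fun j k => funext fun ω => by ring
  rw [integral_sq_sum_eq_sum_sum fun j k => by
    rw [hrearrange]; exact (hindep j k).integrable_mul (hX j k) (hW j k)]
  refine Finset.sum_congr rfl fun j _ => Finset.sum_congr rfl fun k _ => ?_
  rw [hrearrange]
  exact (hindep j k).integral_fun_mul_eq_mul_integral
    (hX j k).aestronglyMeasurable (hW j k).aestronglyMeasurable

theorem Exchangeable.integral_sq_sum_mul_of_indepFun [Fintype ι] [Nontrivial ι]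
    [IsProbabilityMeasure P] {X W : Ω → ι → ℝ} (hX : Exchangeable P X) (hXm : Measurable X)
    (hXW : IndepFun X W P) (hXint : ∀ j k, Integrable (fun ω => X ω j * X ω k) P)
    (hWint : ∀ j k, Integrable (fun ω => W ω j * W ω k) P)
    (hXsum : ∀ᵐ ω ∂P, ∑ j, X ω j = 0) (hWsum : ∀ᵐ ω ∂P, ∑ j, W ω j = 1) (i : ι) :
    ∫ ω, (∑ j, W ω j * X ω j) ^ 2 ∂P
      = Fintype.card ι / (Fintype.card ι - 1) * (∫ ω, X ω i ^ 2 ∂P)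
        * ∫ ω, (∑ j, W ω j ^ 2 - 1 / Fintype.card ι) ∂P := by
  classical
  set N : ℝ := (Fintype.card ι : ℝ)
  set c := ∫ ω, X ω i ^ 2 ∂P
  set m := -c / (N - 1)
  have hN : 1 < N := by simp only [N]; exact_mod_cast Fintype.one_lt_card
  have hdiag : ∀ j, ∫ ω, X ω j * X ω j ∂P = c := fun j => by
    simp_rw [← sq]
    exact hX.integral_comp_apply_eq hXm (f := fun x => x ^ 2) (by fun_prop) j i
  have hoff : ∀ j k, j ≠ k → ∫ ω, X ω j * X ω k ∂P = m := fun j k hjk => by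
    obtain ⟨i', hi'⟩ := exists_ne i
    rw [hX.integral_mul_eq_of_ne hXm hjk hi'.symm,
      hX.integral_mul_of_sum_eq_zero hXm hXint hXsum hi'.symm, hdiag]
  have hcov : ∀ j k, ∫ ω, X ω j * X ω k ∂P = m + if j = k then c - m else 0 := fun j k => by
    split_ifs with hjk
    · rw [hjk, hdiag]; ring
    · rw [hoff j k hjk, add_zero]
  have hWtotal : ∑ j, ∑ k, ∫ ω, W ω j * W ω k ∂P = 1 := by
    have hsq : (fun ω => (∑ j, W ω j) ^ 2) =ᵐ[P] fun _ => (1 : ℝ) :=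
      hWsum.mono fun ω h => by simp only [h, one_pow]
    rw [← integral_sq_sum_eq_sum_sum hWint, integral_congr_ae hsq]
    simp
  have hS₂ : ∫ ω, (∑ j, W ω j ^ 2 - 1 / N) ∂P = ∑ j, ∫ ω, W ω j * W ω j ∂P - 1 / N := by
    simp_rw [sq]
    rw [integral_sub (integrable_finsetSum _ fun j _ => hWint j j) (integrable_const _),
      integral_finsetSum _ fun j _ => hWint j j]
    simp
  calc ∫ ω, (∑ j, W ω j * X ω j) ^ 2 ∂P
      = ∑ j, ∑ k, (∫ ω, X ω j * X ω k ∂P) * ∫ ω, W ω j * W ω k ∂P :=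
        hXW.integral_sq_sum_mul hXint hWint
    _ = m * ∑ j, ∑ k, ∫ ω, W ω j * W ω k ∂P + (c - m) * ∑ j, ∫ ω, W ω j * W ω j ∂P := by
        simp only [hcov, add_mul, ite_mul, zero_mul, Finset.sum_add_distrib, Finset.sum_ite_eq,
          Finset.mem_univ, if_true, Finset.mul_sum]
    _ = N / (N - 1) * c * ∫ ω, (∑ j, W ω j ^ 2 - 1 / N) ∂P := by
        rw [hWtotal, hS₂]
        have hN₁ : N - 1 ≠ 0 := by linarith
        simp only [m]
        field_simp
        ring

end ProbabilityTheory

/-- **Variance identity for the diagonal quadratic form** (identity (3.14)): if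
`(Y₁,…,Y_n)` is exchangeable with `∑_j Y_j² = 1` a.s., `β₄ = E[Y₁⁴]`, and `(q₁,…,q_n)` is
independent of `Y` with `0 ≤ q_j ≤ 1` and `∑_j q_j = 1` a.s., then with
`S₂ = ∑_j q_j²`,
`E[(∑_j q_j (n Y_j² − 1))²] = n (n² β₄ − 1)/(n−1) · E[S₂ − 1/n]`. -/
theorem diag_quadratic_variance_identity
    (n : ℕ) (hn : 2 ≤ n)
    (Ω : Type*) [MeasurableSpace Ω] (P : Measure Ω) [IsProbabilityMeasure P]
    (Y q : Ω → Fin n → ℝ) (hYm : Measurable Y) (hqm : Measurable q)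
    (hexch : ∀ σ : Equiv.Perm (Fin n),
      Measure.map (fun ω i => Y ω (σ i)) P = Measure.map Y P)
    (hYnorm : ∀ᵐ ω ∂P, ∑ j, Y ω j ^ 2 = 1)
    (hindep : IndepFun Y q P)
    (hq01 : ∀ᵐ ω ∂P, ∀ j, 0 ≤ q ω j ∧ q ω j ≤ 1)
    (hqsum : ∀ᵐ ω ∂P, ∑ j, q ω j = 1) :
    ∫ ω, (∑ j, q ω j * ((n : ℝ) * Y ω j ^ 2 - 1)) ^ 2 ∂P
      = (n : ℝ) * ((n : ℝ) ^ 2 * (∫ ω, Y ω ⟨0, by omega⟩ ^ 4 ∂P) - 1) / ((n : ℝ) - 1)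
        * ∫ ω, ((∑ j, q ω j ^ 2) - 1 / (n : ℝ)) ∂P := by
  have : Nontrivial (Fin n) := Fin.nontrivial_iff_two_le.mpr hn
  have hYex : Exchangeable P Y := hexch
  set Z : Ω → Fin n → ℝ := fun ω j => (n : ℝ) * Y ω j ^ 2 - 1
  have hn₁ : (1 : ℝ) ≤ n := by exact_mod_cast (by omega : 1 ≤ n)
  have hZbound : ∀ᵐ ω ∂P, ∀ j, |Z ω j| ≤ n := hYnorm.mono fun ω h j => by
    have hY := sq_le_one_of_sum_sq_eq_one h j
    exact abs_le.mpr ⟨by nlinarith [sq_nonneg (Y ω j)], by nlinarith⟩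
  have hqbound : ∀ᵐ ω ∂P, ∀ j, |q ω j| ≤ 1 := hq01.mono fun ω h j =>
    abs_le.mpr ⟨by linarith [(h j).1], (h j).2⟩
  have hZsum : ∀ᵐ ω ∂P, ∑ j, Z ω j = 0 := hYnorm.mono fun ω h => by
    simp [Z, Finset.sum_sub_distrib, ← Finset.mul_sum, h]
  have hZq : IndepFun Z q P :=
    hindep.comp (by fun_prop : Measurable fun (v : Fin n → ℝ) i => (n : ℝ) * v i ^ 2 - 1)
      measurable_id
  have key := (hYex.comp_apply hYm (f := fun y => (n : ℝ) * y ^ 2 - 1) (by fun_prop)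
    ).integral_sq_sum_mul_of_indepFun (by fun_prop) hZq
    (integrable_mul_of_ae_abs_le (by fun_prop) hZbound)
    (integrable_mul_of_ae_abs_le hqm hqbound) hZsum hqsum ⟨0, by omega⟩
  have hEZ₂ := hYex.integral_card_mul_sq_sub_one_sq hYm hYnorm ⟨0, by omega⟩
  simp only [Fintype.card_fin] at key hEZ₂
  rw [key, hEZ₂]
  ring
end
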